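/- There exists a financial network without default costs (α = β = 1) and a budget M > 0 such that the edge-removal game with cash injections—where, for every strategy profile, the regulator injects the entire budget M into the defaulting bank with the highest threat index of the modified network, breaking ties in favor of the lowest index (and into bank 1 if no bank is in default)—admits no pure Nash equilibrium. -/
import Mathlib


open Finset

/-- `p` is a proportional clearing payment matrix for the network with external assets `e`,
liabilities `l` and default costs `α, β`. -/
def IsClearing {ι : Type*} [Fintype ι] (α β : ℝ) (e : ι → ℝ) (l : ι → ι → ℝ)
    (p : ι → ι → ℝ) : Prop :=
  (∀ i j, 0 ≤ p i j) ∧ (∀ i j, p i j ≤ l i j) ∧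
  (∀ i, (∑ j, l i j) ≤ e i + (∑ j, p j i) → ∀ j, p i j = l i j) ∧
  (∀ i, e i + (∑ j, p j i) < (∑ j, l i j) →
    ∀ j, p i j = (α * e i + β * (∑ k, p k i)) * l i j / (∑ k, l i k))

/-- `p` is the maximal clearing payment matrix. -/
def IsMaxClearing {ι : Type*} [Fintype ι] (α β : ℝ) (e : ι → ℝ) (l p : ι → ι → ℝ) : Prop :=
  IsClearing α β e l p ∧ ∀ q, IsClearing α β e l q → ∀ i j, q i j ≤ p i j

/-- Total assets of bank `i` under payments `p`. -/
def assets {ι : Type*} [Fintype ι] (e : ι → ℝ) (p : ι → ι → ℝ) (i : ι) : ℝ :=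
  e i + ∑ j, p j i

/-- The liabilities obtained from `l` when each bank `j` removes the incoming edges from
the banks in `s j`. -/
def removeEdges {ι : Type*} [DecidableEq ι] (l : ι → ι → ℝ) (s : ι → Finset ι) :
    ι → ι → ℝ :=
  fun i j => if i ∈ s j then 0 else l i j

/-- The set of banks in default under payments `p`. -/
def Defaulting {ι : Type*} [Fintype ι] (e : ι → ℝ) (l p : ι → ι → ℝ) : Set ι :=
  {i | e i + (∑ j, p j i) < ∑ j, l i j}

/-- `μ` is the threat-index vector for the network `(e, l)` with (maximal clearing)
payments `p`:  `μ i = 0` for solvent banks and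
`μ i = 1 + ∑_{j ∈ D} (l i j / L i) · μ j` for banks in default. -/
def IsThreatIndex {ι : Type*} [Fintype ι] (e : ι → ℝ) (l p : ι → ι → ℝ) (μ : ι → ℝ) :
    Prop :=
  (∀ i, i ∉ Defaulting e l p → μ i = 0) ∧
  (∀ i, i ∈ Defaulting e l p →
    μ i = 1 + ∑ j, Set.indicator (Defaulting e l p)
      (fun j' => l i j' / (∑ k, l i k) * μ j') j)

/-- The regulator's injection rule: the budget goes to the defaulting bank with the
highest threat index, ties broken in favor of the lowest index; to bank `0` if no bank
is in default. -/
def TargetSpec {n : ℕ} (e : Fin n → ℝ) (l p : Fin n → Fin n → ℝ) (μ : Fin n → ℝ)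
    (b : Fin n) : Prop :=
  (Defaulting e l p = ∅ → (b : ℕ) = 0) ∧
  (Defaulting e l p ≠ ∅ →
    b ∈ Defaulting e l p ∧ (∀ i ∈ Defaulting e l p, μ i ≤ μ b) ∧
    (∀ i ∈ Defaulting e l p, μ i = μ b → b ≤ i))

noncomputable def ev : Fin 3 → ℝ := fun i => if i = 1 then 1/2 else if i = 2 then 2 else 0

noncomputable def lv : Fin 3 → Fin 3 → ℝ :=
  fun i j => if j = 0 ∧ i ≠ 0 then 1 else if i = 2 ∧ j = 1 then 1 else 0

lemma master (s : Fin 3 → Finset (Fin 3)) (P Q : Fin 3 → Fin 3 → ℝ) (μ : Fin 3 → ℝ)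
    (b : Fin 3)
    (hP : IsClearing 1 1 ev (removeEdges lv s) P)
    (hT : TargetSpec ev (removeEdges lv s) P μ b)
    (hQ : IsClearing 1 1 (fun i => ev i + if i = b then 2 else 0) (removeEdges lv s) Q) :
    b = (if 1 ∉ s 0 ∧ 2 ∈ s 1 then 1 else 0) ∧
    assets (fun i => ev i + if i = b then 2 else 0) Q 0 =
      (if 2 ∈ s 0 then (0:ℝ) else 1) + (if 1 ∈ s 0 then (0:ℝ) else 1) +
        (if b = 0 then 2 else 0) ∧
    assets (fun i => ev i + if i = b then 2 else 0) Q 1 =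
      1/2 + (if 2 ∈ s 1 then (0:ℝ) else 1) + (if b = 1 then 2 else 0) := by
  set l' := removeEdges lv s with hl'
  obtain ⟨hP0, hPle, hPf, -⟩ := hP
  obtain ⟨hQ0, hQle, hQf, -⟩ := hQ
  have lrow0 : ∀ j, l' 0 j = 0 := by
    intro j; simp [hl', removeEdges, lv]
  have l11 : l' 1 1 = 0 := by simp [hl', removeEdges, lv]
  have l12 : l' 1 2 = 0 := by simp [hl', removeEdges, lv]
  have l22 : l' 2 2 = 0 := by simp [hl', removeEdges, lv]
  have l10 : l' 1 0 = if 1 ∈ s 0 then 0 else 1 := by simp [hl', removeEdges, lv]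
  have l20 : l' 2 0 = if 2 ∈ s 0 then 0 else 1 := by simp [hl', removeEdges, lv]
  have l21 : l' 2 1 = if 2 ∈ s 1 then 0 else 1 := by simp [hl', removeEdges, lv]
  have l10b : 0 ≤ l' 1 0 ∧ l' 1 0 ≤ 1 := by rw [l10]; split <;> norm_num
  have l20b : 0 ≤ l' 2 0 ∧ l' 2 0 ≤ 1 := by rw [l20]; split <;> norm_num
  have l21b : 0 ≤ l' 2 1 ∧ l' 2 1 ≤ 1 := by rw [l21]; split <;> norm_num
  have ev0 : ev 0 = 0 := by simp [ev]
  have ev1 : ev 1 = 1/2 := by simp [ev]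
  have ev2 : ev 2 = 2 := by simp [ev]
  have P01 : P 0 1 = 0 := le_antisymm ((hPle 0 1).trans_eq (lrow0 1)) (hP0 0 1)
  have P11 : P 1 1 = 0 := le_antisymm ((hPle 1 1).trans_eq l11) (hP0 1 1)
  have sumP2 : (0:ℝ) ≤ ∑ j, P j 2 := Finset.sum_nonneg fun j _ => hP0 j 2
  have hL2 : (∑ j, l' 2 j) ≤ ev 2 + ∑ j, P j 2 := by
    rw [Fin.sum_univ_three, l22, ev2]; linarith [l20b.2, l21b.2]
  have h2full : ∀ j, P 2 j = l' 2 j := hPf 2 hL2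
  have colP1 : ∑ j, P j 1 = if 2 ∈ s 1 then 0 else 1 := by
    rw [Fin.sum_univ_three, P01, P11, h2full 1, l21]; ring
  have hL1 : ∑ j, l' 1 j = if 1 ∈ s 0 then 0 else 1 := by
    rw [Fin.sum_univ_three, l10, l11, l12]; ring
  have hL0 : ∑ j, l' 0 j = 0 := by
    rw [Fin.sum_univ_three, lrow0 0, lrow0 1, lrow0 2]; ring
  have hD1 : ((1:Fin 3) ∈ Defaulting ev l' P) ↔ (1 ∉ s 0 ∧ 2 ∈ s 1) := by
    simp only [Defaulting, Set.mem_setOf_eq, colP1, hL1, ev1]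
    by_cases h1 : 1 ∈ s 0 <;> by_cases h2 : 2 ∈ s 1 <;> simp [h1, h2] <;> norm_num
  have hD0 : (0:Fin 3) ∉ Defaulting ev l' P := by
    simp only [Defaulting, Set.mem_setOf_eq, not_lt, hL0, ev0]
    have : (0:ℝ) ≤ ∑ j, P j 0 := Finset.sum_nonneg fun j _ => hP0 j 0
    linarith
  have hD2 : (2:Fin 3) ∉ Defaulting ev l' P := by
    simp only [Defaulting, Set.mem_setOf_eq, not_lt]
    exact hL2
  have hb : b = if 1 ∉ s 0 ∧ 2 ∈ s 1 then 1 else 0 := by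
    by_cases hc : 1 ∉ s 0 ∧ 2 ∈ s 1
    · rw [if_pos hc]
      have hmem : (1:Fin 3) ∈ Defaulting ev l' P := hD1.mpr hc
      have hne : Defaulting ev l' P ≠ ∅ := by
        intro h; rw [h] at hmem; exact hmem
      obtain ⟨hbD, -, -⟩ := hT.2 hne
      fin_cases b
      · exact absurd hbD hD0
      · rfl
      · exact absurd hbD hD2
    · rw [if_neg hc]
      have hemp : Defaulting ev l' P = ∅ := by
        ext i
        simp only [Set.mem_empty_iff_false, iff_false]
        fin_cases i
        · exact hD0
        · intro h; exact hc (hD1.mp h)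
        · exact hD2
      exact Fin.ext (by simpa using hT.1 hemp)
  refine ⟨hb, ?_⟩
  -- post-injection analysis
  have sumQ2 : (0:ℝ) ≤ ∑ j, Q j 2 := Finset.sum_nonneg fun j _ => hQ0 j 2
  have hQ2full : ∀ j, Q 2 j = l' 2 j := by
    apply hQf 2
    rw [Fin.sum_univ_three, l22]
    have : (0:ℝ) ≤ if (2:Fin 3) = b then 2 else 0 := by split <;> norm_num
    simp only [ev2]
    linarith [l20b.2, l21b.2]
  have Q01 : Q 0 1 = 0 := le_antisymm ((hQle 0 1).trans_eq (lrow0 1)) (hQ0 0 1)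
  have Q11 : Q 1 1 = 0 := le_antisymm ((hQle 1 1).trans_eq l11) (hQ0 1 1)
  have Q00 : Q 0 0 = 0 := le_antisymm ((hQle 0 0).trans_eq (lrow0 0)) (hQ0 0 0)
  have colQ1 : ∑ j, Q j 1 = if 2 ∈ s 1 then 0 else 1 := by
    rw [Fin.sum_univ_three, Q01, Q11, hQ2full 1, l21]; ring
  have hQ1full : ∀ j, Q 1 j = l' 1 j := by
    apply hQf 1
    rw [hL1, colQ1]
    simp only [ev1]
    by_cases h1 : 1 ∈ s 0
    · have : (0:ℝ) ≤ if (1:Fin 3) = b then 2 else 0 := by split <;> norm_num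
      simp only [h1, if_true]
      by_cases h2 : 2 ∈ s 1 <;> simp [h2] <;> linarith
    · by_cases h2 : 2 ∈ s 1
      · have hb1 : b = 1 := by rw [hb, if_pos ⟨h1, h2⟩]
        simp [h1, h2, hb1]; norm_num
      · have : (0:ℝ) ≤ if (1:Fin 3) = b then 2 else 0 := by split <;> norm_num
        simp only [h1, if_false, h2]
        norm_num
        linarith
  have hif0 : (if (0:Fin 3) = b then (2:ℝ) else 0) = if b = 0 then 2 else 0 := by
    by_cases h : b = 0 <;> simp [h, eq_comm]
  have hif1 : (if (1:Fin 3) = b then (2:ℝ) else 0) = if b = 1 then 2 else 0 := by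
    by_cases h : b = 1 <;> simp [h, eq_comm]
  constructor
  · simp only [assets]
    rw [Fin.sum_univ_three, Q00, hQ1full 0, hQ2full 0, l10, l20, ev0, hif0]
    ring
  · simp only [assets]
    rw [colQ1, ev1, hif1]
    ring

/-- There is a financial network without default costs and a budget `M > 0` such that the
edge-removal game with cash injections (the regulator injecting the whole budget into the
defaulting bank with the highest threat index, lowest index on ties) admits no pure Nash
equilibrium.  Here `P₀ s` are the maximal clearing payments of the modified network
before the injection, `μ s` its threat-index vector, `b s` the recipient of the budget
and `Pay s` the maximal clearing payments after the injection; a bank's utility is its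
total assets (including its own injection, if any). -/
theorem injection_game_no_NE :
    ∃ (n : ℕ) (hn : 0 < n) (e : Fin n → ℝ) (l : Fin n → Fin n → ℝ) (M : ℝ),
      0 < M ∧ (∀ i, 0 ≤ e i) ∧ (∀ i j, 0 ≤ l i j) ∧ (∀ i, l i i = 0) ∧
      ∀ (P₀ Pay : (Fin n → Finset (Fin n)) → Fin n → Fin n → ℝ)
        (μ : (Fin n → Finset (Fin n)) → Fin n → ℝ)
        (b : (Fin n → Finset (Fin n)) → Fin n),
        (∀ s, IsMaxClearing 1 1 e (removeEdges l s) (P₀ s)) →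
        (∀ s, IsThreatIndex e (removeEdges l s) (P₀ s) (μ s)) →
        (∀ s, TargetSpec e (removeEdges l s) (P₀ s) (μ s) (b s)) →
        (∀ s, IsMaxClearing 1 1
          (fun i => e i + if i = b s then M else 0) (removeEdges l s) (Pay s)) →
        ¬ ∃ s : Fin n → Finset (Fin n),
            ∀ (j : Fin n) (R : Finset (Fin n)),
              assets (fun i => e i + if i = b (Function.update s j R) then M else 0)
                  (Pay (Function.update s j R)) j
                ≤ assets (fun i => e i + if i = b s then M else 0) (Pay s) j  := by
  refine ⟨3, by norm_num, ev, lv, 2, by norm_num, ?_, ?_, ?_, ?_⟩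
  · intro i; unfold ev; split
    · norm_num
    · split <;> norm_num
  · intro i j; unfold lv; split
    · norm_num
    · split <;> norm_num
  · intro i; fin_cases i <;> simp [lv]
  intro P₀ Pay μ b h1 h2 h3 h4
  rintro ⟨s, hs⟩
  have key : ∀ t : Fin 3 → Finset (Fin 3),
      b t = (if 1 ∉ t 0 ∧ 2 ∈ t 1 then 1 else 0) ∧
      assets (fun i => ev i + if i = b t then 2 else 0) (Pay t) 0 =
        (if 2 ∈ t 0 then (0:ℝ) else 1) + (if 1 ∈ t 0 then (0:ℝ) else 1) +
          (if b t = 0 then 2 else 0) ∧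
      assets (fun i => ev i + if i = b t then 2 else 0) (Pay t) 1 =
        1/2 + (if 2 ∈ t 1 then (0:ℝ) else 1) + (if b t = 1 then 2 else 0) :=
    fun t => master t (P₀ t) (Pay t) (μ t) (b t) (h1 t).1 (h3 t) (h4 t).1
  obtain ⟨hbs, hu0s, hu1s⟩ := key s
  by_cases hC : 2 ∈ s 1
  · by_cases hB : 1 ∈ s 0
    · -- bank 1 deviates to ∅
      obtain ⟨hbt, -, hu1t⟩ := key (Function.update s 1 ∅)
      have h10 : Function.update s 1 ∅ 0 = s 0 :=
        Function.update_of_ne (by decide) _ _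
      have h11 : Function.update s 1 ∅ 1 = (∅ : Finset (Fin 3)) :=
        Function.update_self _ _ _
      simp only [h10, h11] at hbt hu1t
      have hbs' : b s = 0 := by rw [hbs]; simp [hB]
      have hbt' : b (Function.update s 1 ∅) = 0 := by rw [hbt]; simp [hB]
      have hineq := hs 1 ∅
      rw [hu1t, hu1s, hbs', hbt'] at hineq
      simp [hB, hC] at hineq
      norm_num at hineq
    · -- bank 0 deviates to {1}
      obtain ⟨hbt, hu0t, -⟩ := key (Function.update s 0 {1})
      have h10 : Function.update s 0 {1} 0 = ({1} : Finset (Fin 3)) :=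
        Function.update_self _ _ _
      have h11 : Function.update s 0 {1} 1 = s 1 :=
        Function.update_of_ne (by decide) _ _
      simp only [h10, h11] at hbt hu0t
      have hbs' : b s = 1 := by rw [hbs]; simp [hB, hC]
      have hbt' : b (Function.update s 0 {1}) = 0 := by rw [hbt]; simp
      have hineq := hs 0 {1}
      rw [hu0t, hu0s, hbs', hbt'] at hineq
      simp [hB] at hineq
      rcases em (2 ∈ s 0) with hA | hA <;> simp [hA] at hineq <;> norm_num at hineq
  · -- 2 ∉ s 1 : b s = 0
    have hbs' : b s = 0 := by rw [hbs]; simp [hC]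
    by_cases hAB : 2 ∉ s 0 ∧ 1 ∉ s 0
    · -- bank 1 deviates to {2}
      obtain ⟨hbt, -, hu1t⟩ := key (Function.update s 1 {2})
      have h10 : Function.update s 1 {2} 0 = s 0 :=
        Function.update_of_ne (by decide) _ _
      have h11 : Function.update s 1 {2} 1 = ({2} : Finset (Fin 3)) :=
        Function.update_self _ _ _
      simp only [h10, h11] at hbt hu1t
      have hbt' : b (Function.update s 1 {2}) = 1 := by
        rw [hbt]; simp [hAB.2]
      have hineq := hs 1 {2}
      rw [hu1t, hu1s, hbs', hbt'] at hineq
      simp [hC] at hineq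
    · -- bank 0 deviates to ∅
      obtain ⟨hbt, hu0t, -⟩ := key (Function.update s 0 ∅)
      have h10 : Function.update s 0 ∅ 0 = (∅ : Finset (Fin 3)) :=
        Function.update_self _ _ _
      have h11 : Function.update s 0 ∅ 1 = s 1 :=
        Function.update_of_ne (by decide) _ _
      simp only [h10, h11] at hbt hu0t
      have hbt' : b (Function.update s 0 ∅) = 0 := by rw [hbt]; simp [hC]
      have hineq := hs 0 ∅
      rw [hu0t, hu0s, hbs', hbt'] at hineq
      simp at hineq
      rcases em (2 ∈ s 0) with hA | hA <;> rcases em (1 ∈ s 0) with hB | hB <;>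
        simp [hA, hB] at hineq <;> norm_num at hineq
      exact hAB ⟨hA, hB⟩
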